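/- Let σ > 0 and let γ_σ : ℝ^{dL} → ℝ be the Gaussian density γ_σ(ε) = (2πσ²)^{−dL/2} exp(−‖ε‖²/(2σ²)). Let S ⊆ (ℝ^d)^L be a measurable set on which E is injective and on which det(I_d − Σ_t(x)·A) ≠ 0 for all x ∈ S and all 2 ≤ t ≤ L. Then ∫_{E(S)} γ_σ(ε) dε = ∫_S γ_σ(E(x)) · ∏_{t=2}^L |det(I_d − Σ_t(x)·A)| dx (integrals with respect to Lebesgue measure); moreover the induced density p(x) := γ_σ(E(x)) · ∏_{t=2}^L |det(I_d − Σ_t(x)·A)| satisfies, for every x ∈ S, log p(x) = −(1/(2σ²)) Σ_{t=1}^L ‖e_t(x)‖² + Σ_{t=2}^L log|det(I_d − Σ_t(x)·A)| − dL·log σ − (dL/2)·log(2π). -/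

import Mathlib

/- Vector strict-causal attention context (0-indexed positions via `Fin L`):
   μ_t(x), covariance Σ_t(x), residual e_t(x) = x_t − μ_t(x), residual map E = vResidMap.
   (ℝ^d)^L ≅ ℝ^{dL} carries Lebesgue measure (the pi `volume`), and the Gaussian density is
   γ_σ(ε) = (2πσ²)^{−dL/2} exp(−‖ε‖²/(2σ²)) with ‖ε‖² = Σ_t Σ_i ε_{t,i}². -/

noncomputable section

open Matrix MeasureTheory

def vMu (d L : ℕ) (A : Matrix (Fin d) (Fin d) ℝ) (x : Fin L → Fin d → ℝ) (t : Fin L) :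
    Fin d → ℝ :=
  ∑ s ∈ Finset.Iio t,
    (Real.exp (x t ⬝ᵥ (Aᵀ *ᵥ x s)) /
      ∑ r ∈ Finset.Iio t, Real.exp (x t ⬝ᵥ (Aᵀ *ᵥ x r))) • x s

def vSigma (d L : ℕ) (A : Matrix (Fin d) (Fin d) ℝ) (x : Fin L → Fin d → ℝ) (t : Fin L) :
    Matrix (Fin d) (Fin d) ℝ :=
  ∑ s ∈ Finset.Iio t,
    (Real.exp (x t ⬝ᵥ (Aᵀ *ᵥ x s)) /
      ∑ r ∈ Finset.Iio t, Real.exp (x t ⬝ᵥ (Aᵀ *ᵥ x r))) •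
      Matrix.vecMulVec (x s - vMu d L A x t) (x s - vMu d L A x t)

def vResidMap (d L : ℕ) (A : Matrix (Fin d) (Fin d) ℝ) (x : Fin L → Fin d → ℝ) :
    Fin L → Fin d → ℝ :=
  fun t => x t - vMu d L A x t

/-- The Gaussian density γ_σ on (ℝ^d)^L ≅ ℝ^{dL} (Euclidean norm). -/
def gaussDensity (d L : ℕ) (σ : ℝ) (ε : Fin L → Fin d → ℝ) : ℝ :=
  (2 * Real.pi * σ ^ 2) ^ (-(d * L : ℝ) / 2) *
    Real.exp (-(∑ t : Fin L, ∑ i : Fin d, ε t i ^ 2) / (2 * σ ^ 2))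

/-! The residual `e_t` depends only on `x_1, …, x_t`, so the Jacobian of `E` is block lower
triangular and its determinant is the product of the diagonal blocks `∂e_t/∂x_t`. Moving `x_t`
along `v` shifts the attention logits linearly by `⟨v, Aᵀ x_s⟩`, and the derivative of a softmax
average along a linear shift of the logits is the attention-weighted covariance of the shift with
the averaged vectors; this gives `∂e_t/∂x_t = I − Σ_t A`, which is `I` for `t = 1`
because `Σ_1 = 0`. The integral identity is then the change of variables formula, and the
log-density splits into the Gaussian part and the Jacobian part. -/

theorem LinearMap.det_eq_prod_det_diagonal_block {ι R M : Type*} [Fintype ι] [LinearOrder ι]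
    [CommRing R] [AddCommGroup M] [Module R M] [Module.Free R M] [Module.Finite R M]
    (T : (ι → M) →ₗ[R] ι → M) (hT : ∀ s t, s < t → ∀ v, T (Pi.single t v) s = 0) :
    T.det = ∏ t, (LinearMap.proj t ∘ₗ T ∘ₗ LinearMap.single R (fun _ ↦ M) t).det := by
  let b := Module.Free.chooseBasis R M
  let B := Pi.basis fun _ : ι ↦ b
  have hentry : ∀ p q,
      LinearMap.toMatrix B B T p q = b.repr (T (Pi.single q.1 (b q.2)) p.1) p.2 :=
    fun p q ↦ by simp [B, LinearMap.toMatrix_apply, Pi.basis_apply]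
  have hBT : (LinearMap.toMatrix B B T)ᵀ.BlockTriangular Sigma.fst := fun p q hqp ↦ by
    rw [transpose_apply, hentry, hT q.1 p.1 hqp, map_zero, Finsupp.zero_apply]
  rw [← LinearMap.det_toMatrix B, ← Matrix.det_transpose, hBT.det_fintype]
  refine Fintype.prod_congr _ _ fun t ↦ ?_
  rw [← LinearMap.det_toMatrix b, ← Matrix.det_transpose,
    ← Matrix.det_submatrix_equiv_self (Equiv.sigmaSubtype t).symm]
  congr 1
  ext i j
  simp [Matrix.toSquareBlock_def, hentry, LinearMap.toMatrix_apply, Equiv.sigmaSubtype]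

section Softmax

variable {ι : Type*} (s : Finset ι)

def softmax (a : ι → ℝ) (i : ι) : ℝ :=
  Real.exp (a i) / ∑ j ∈ s, Real.exp (a j)

variable {s}

lemma sum_softmax (hs : s.Nonempty) (a : ι → ℝ) : ∑ i ∈ s, softmax s a i = 1 := by
  simp only [softmax, ← Finset.sum_div]
  exact div_self (Finset.sum_pos (fun _ _ ↦ Real.exp_pos _) hs).ne'

variable (s)

lemma hasDerivAt_softmax (a b : ι → ℝ) (i : ι) :
    HasDerivAt (fun h : ℝ ↦ softmax s (a + h • b) i)
      (softmax s a i * (b i - ∑ j ∈ s, softmax s a j * b j)) 0 := by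
  rcases s.eq_empty_or_nonempty with rfl | hs
  · simpa [softmax] using hasDerivAt_const (0 : ℝ) (0 : ℝ)
  have hexp : ∀ j, HasDerivAt (fun h : ℝ ↦ Real.exp ((a + h • b) j)) (Real.exp (a j) * b j) 0 :=
    fun j ↦ by simpa using (((hasDerivAt_id (0 : ℝ)).mul_const (b j)).const_add (a j)).exp
  have hZ : ∑ j ∈ s, Real.exp (a j) ≠ 0 := (Finset.sum_pos (fun _ _ ↦ Real.exp_pos _) hs).ne'
  refine ((hexp i).fun_div (HasDerivAt.fun_sum fun j _ ↦ hexp j)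
    (by simpa using hZ)).congr_deriv ?_
  simp only [softmax, zero_smul, add_zero, div_mul_eq_mul_div, ← Finset.sum_div]
  field_simp

lemma hasDerivAt_sum_softmax_smul {E : Type*} [NormedAddCommGroup E] [NormedSpace ℝ E]
    (a b : ι → ℝ) (v : ι → E) :
    HasDerivAt (fun h : ℝ ↦ ∑ i ∈ s, softmax s (a + h • b) i • v i)
      (∑ i ∈ s, (softmax s a i * (b i - ∑ j ∈ s, softmax s a j * b j)) •
        (v i - ∑ j ∈ s, softmax s a j • v j)) 0 := by
  have hcentred : ∑ i ∈ s, softmax s a i * (b i - ∑ j ∈ s, softmax s a j * b j) = 0 := by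
    rcases s.eq_empty_or_nonempty with rfl | hs
    · simp
    simp only [mul_sub, Finset.sum_sub_distrib, ← Finset.sum_mul, sum_softmax hs, one_mul,
      sub_self]
  convert HasDerivAt.fun_sum fun i _ ↦ (hasDerivAt_softmax s a b i).smul_const (v i) using 1
  simp only [smul_sub, Finset.sum_sub_distrib, ← Finset.sum_smul, hcentred, zero_smul, sub_zero]

end Softmax

section ResidualMap

variable {d L : ℕ} (A : Matrix (Fin d) (Fin d) ℝ)

lemma vResidMap_apply_congr {x y : Fin L → Fin d → ℝ} {t : Fin L} (h : ∀ s ≤ t, y s = x s) :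
    vResidMap d L A y t = vResidMap d L A x t := by
  have hlt : ∀ s ∈ Finset.Iio t, y s = x s := fun s hs ↦ h s (Finset.mem_Iio.1 hs).le
  simp +contextual only [vResidMap, vMu, h t le_rfl, hlt]

lemma differentiable_vResidMap : Differentiable ℝ (vResidMap d L A) := by
  rw [differentiable_pi]
  intro t x
  unfold vResidMap vMu
  rcases (Finset.Iio t).eq_empty_or_nonempty with h | h
  · simp only [h, Finset.sum_empty, sub_zero]
    fun_prop
  · simp only [dotProduct, Matrix.mulVec]
    fun_prop (disch := exact (Finset.sum_pos (fun _ _ ↦ Real.exp_pos _) h).ne')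

lemma hasDerivAt_vResidMap_add_smul_single (x : Fin L → Fin d → ℝ) (t : Fin L) (v : Fin d → ℝ) :
    HasDerivAt (fun h : ℝ ↦ vResidMap d L A (x + h • (Pi.single t v : Fin L → Fin d → ℝ)) t)
      ((1 - vSigma d L A x t * A) *ᵥ v) 0 := by
  set a : Fin L → ℝ := fun s ↦ x t ⬝ᵥ (Aᵀ *ᵥ x s)
  set b : Fin L → ℝ := fun s ↦ v ⬝ᵥ (Aᵀ *ᵥ x s)
  have hfun : (fun h : ℝ ↦ vResidMap d L A (x + h • (Pi.single t v : Fin L → Fin d → ℝ)) t) =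
      fun h ↦ x t + h • v - ∑ s ∈ Finset.Iio t, softmax (Finset.Iio t) (a + h • b) s • x s := by
    funext h
    have hxs : ∀ s ∈ Finset.Iio t, (x + h • (Pi.single t v : Fin L → Fin d → ℝ)) s = x s :=
      fun s hs ↦ by simp [(Finset.mem_Iio.1 hs).ne]
    simp +contextual only [vResidMap, vMu, softmax, hxs]
    simp [a, b, add_dotProduct]
  rw [hfun]
  refine (((hasDerivAt_id (0 : ℝ)).smul_const v).const_add (x t)).sub
    (hasDerivAt_sum_softmax_smul _ a b x) |>.congr_deriv ?_
  have hb : ∀ y, v ⬝ᵥ (Aᵀ *ᵥ y) = y ⬝ᵥ (A *ᵥ v) := fun y ↦ by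
    rw [mulVec_transpose, dotProduct_comm, dotProduct_mulVec]
  rw [sub_mulVec, one_mulVec, one_smul, ← mulVec_mulVec, vSigma, sum_mulVec]
  congr 1
  refine Finset.sum_congr rfl fun s _ ↦ ?_
  rw [smul_mulVec, vecMulVec_mulVec, op_smul_eq_smul, smul_smul]
  congr 2
  simp only [b, hb, vMu, sub_dotProduct, sum_dotProduct, smul_dotProduct, smul_eq_mul]
  rfl

lemma hasDerivAt_vResidMap_add_smul (x w : Fin L → Fin d → ℝ) (t : Fin L) :
    HasDerivAt (fun h : ℝ ↦ vResidMap d L A (x + h • w) t)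
      (fderiv ℝ (vResidMap d L A) x w t) 0 :=
  hasDerivAt_pi.1 ((differentiable_vResidMap A x).hasFDerivAt.hasLineDerivAt w) t

lemma fderiv_vResidMap_single_apply_of_lt (x : Fin L → Fin d → ℝ) {s t : Fin L} (hts : t < s)
    (v : Fin d → ℝ) : fderiv ℝ (vResidMap d L A) x (Pi.single s v) t = 0 := by
  refine (hasDerivAt_vResidMap_add_smul A x _ t).unique ?_
  refine (hasDerivAt_const (0 : ℝ) (vResidMap d L A x t)).congr_of_eventuallyEq
    (Filter.Eventually.of_forall fun h ↦ vResidMap_apply_congr A fun r hr ↦ ?_)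
  simp [(hr.trans_lt hts).ne]

lemma fderiv_vResidMap_single_apply_self (x : Fin L → Fin d → ℝ) (t : Fin L) (v : Fin d → ℝ) :
    fderiv ℝ (vResidMap d L A) x (Pi.single t v) t = (1 - vSigma d L A x t * A) *ᵥ v :=
  (hasDerivAt_vResidMap_add_smul A x _ t).unique (hasDerivAt_vResidMap_add_smul_single A x t v)

lemma det_fderiv_vResidMap (x : Fin L → Fin d → ℝ) :
    (fderiv ℝ (vResidMap d L A) x).det = ∏ t, (1 - vSigma d L A x t * A).det := by
  rw [ContinuousLinearMap.det, LinearMap.det_eq_prod_det_diagonal_block _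
    fun s t hst v ↦ fderiv_vResidMap_single_apply_of_lt A x hst v]
  refine Fintype.prod_congr _ _ fun t ↦ ?_
  rw [← LinearMap.det_toLin']
  exact congrArg LinearMap.det (LinearMap.ext (fderiv_vResidMap_single_apply_self A x t))

lemma vSigma_eq_zero_of_val_eq_zero (x : Fin L → Fin d → ℝ) {t : Fin L} (ht : (t : ℕ) = 0) :
    vSigma d L A x t = 0 := by
  have : Finset.Iio t = ∅ := Finset.eq_empty_of_forall_notMem fun s hs ↦ by
    have := Finset.mem_Iio.1 hs
    omega
  simp [vSigma, this]

lemma abs_det_fderiv_vResidMap (x : Fin L → Fin d → ℝ) :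
    |(fderiv ℝ (vResidMap d L A) x).det| =
      ∏ t ∈ Finset.univ.filter (fun t : Fin L ↦ 1 ≤ (t : ℕ)), |(1 - vSigma d L A x t * A).det| := by
  rw [det_fderiv_vResidMap, Finset.abs_prod, Finset.prod_filter_of_ne fun t _ ht ↦ ?_]
  by_contra h
  simp [vSigma_eq_zero_of_val_eq_zero A x (by omega : (t : ℕ) = 0)] at ht

end ResidualMap

lemma log_gaussDensity {d L : ℕ} {σ : ℝ} (hσ : 0 < σ) (ε : Fin L → Fin d → ℝ) :
    Real.log (gaussDensity d L σ ε) =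
      -(1 / (2 * σ ^ 2)) * (∑ t : Fin L, ∑ i : Fin d, ε t i ^ 2) -
        (d * L : ℝ) * Real.log σ - ((d * L : ℝ) / 2) * Real.log (2 * Real.pi) := by
  have hvar : 0 < 2 * Real.pi * σ ^ 2 := by positivity
  rw [gaussDensity, Real.log_mul (Real.rpow_pos_of_pos hvar _).ne' (Real.exp_pos _).ne',
    Real.log_exp, Real.log_rpow hvar, Real.log_mul (by positivity) (by positivity), Real.log_pow]
  push_cast
  ring

theorem stmt3_general (d L : ℕ) (A : Matrix (Fin d) (Fin d) ℝ)
    (σ : ℝ) (hσ : 0 < σ) (S : Set (Fin L → Fin d → ℝ)) (hS : MeasurableSet S)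
    (hinj : Set.InjOn (vResidMap d L A) S)
    (hdet : ∀ x ∈ S, ∀ t : Fin L, 1 ≤ (t : ℕ) →
      ((1 : Matrix (Fin d) (Fin d) ℝ) - vSigma d L A x t * A).det ≠ 0) :
    ((∫ ε in vResidMap d L A '' S, gaussDensity d L σ ε) =
      ∫ x in S, gaussDensity d L σ (vResidMap d L A x) *
        ∏ t ∈ Finset.univ.filter (fun t : Fin L => 1 ≤ (t : ℕ)),
          |((1 : Matrix (Fin d) (Fin d) ℝ) - vSigma d L A x t * A).det|) ∧
    (∀ x ∈ S,
      Real.log (gaussDensity d L σ (vResidMap d L A x) *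
        ∏ t ∈ Finset.univ.filter (fun t : Fin L => 1 ≤ (t : ℕ)),
          |((1 : Matrix (Fin d) (Fin d) ℝ) - vSigma d L A x t * A).det|) =
      -(1 / (2 * σ ^ 2)) * (∑ t : Fin L, ∑ i : Fin d, vResidMap d L A x t i ^ 2) +
        (∑ t ∈ Finset.univ.filter (fun t : Fin L => 1 ≤ (t : ℕ)),
          Real.log |((1 : Matrix (Fin d) (Fin d) ℝ) - vSigma d L A x t * A).det|) -
        (d * L : ℝ) * Real.log σ - ((d * L : ℝ) / 2) * Real.log (2 * Real.pi)) := by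
  refine ⟨?_, fun x hx ↦ ?_⟩
  · rw [integral_image_eq_integral_abs_det_fderiv_smul volume hS
      (fun x _ ↦ (differentiable_vResidMap A x).hasFDerivAt.hasFDerivWithinAt) hinj]
    refine setIntegral_congr_fun hS fun x _ ↦ ?_
    rw [smul_eq_mul, abs_det_fderiv_vResidMap, mul_comm]
  · have hfactor : ∀ t ∈ Finset.univ.filter (fun t : Fin L ↦ 1 ≤ (t : ℕ)),
        |((1 : Matrix (Fin d) (Fin d) ℝ) - vSigma d L A x t * A).det| ≠ 0 :=
      fun t ht ↦ abs_ne_zero.2 (hdet x hx t (Finset.mem_filter.1 ht).2)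
    have hgauss : gaussDensity d L σ (vResidMap d L A x) ≠ 0 := by
      unfold gaussDensity
      positivity
    rw [Real.log_mul hgauss (Finset.prod_ne_zero_iff.2 hfactor), Real.log_prod hfactor,
      log_gaussDensity hσ]
    ring

/-- Change of variables for the residual map on a set `S` where `E` is injective and the
diagonal Jacobian factors are nonzero, together with the log-density decomposition of the
induced density `p(x) = γ_σ(E(x))·∏_{t=2}^L |det(I_d − Σ_t(x)A)|`. -/
theorem stmt3 (d L : ℕ) (hd : 1 ≤ d) (hL : 1 ≤ L) (A : Matrix (Fin d) (Fin d) ℝ)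
    (σ : ℝ) (hσ : 0 < σ) (S : Set (Fin L → Fin d → ℝ)) (hS : MeasurableSet S)
    (hinj : Set.InjOn (vResidMap d L A) S)
    (hdet : ∀ x ∈ S, ∀ t : Fin L, 1 ≤ (t : ℕ) →
      ((1 : Matrix (Fin d) (Fin d) ℝ) - vSigma d L A x t * A).det ≠ 0) :
    ((∫ ε in vResidMap d L A '' S, gaussDensity d L σ ε) =
      ∫ x in S, gaussDensity d L σ (vResidMap d L A x) *
        ∏ t ∈ Finset.univ.filter (fun t : Fin L => 1 ≤ (t : ℕ)),
          |((1 : Matrix (Fin d) (Fin d) ℝ) - vSigma d L A x t * A).det|) ∧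
    (∀ x ∈ S,
      Real.log (gaussDensity d L σ (vResidMap d L A x) *
        ∏ t ∈ Finset.univ.filter (fun t : Fin L => 1 ≤ (t : ℕ)),
          |((1 : Matrix (Fin d) (Fin d) ℝ) - vSigma d L A x t * A).det|) =
      -(1 / (2 * σ ^ 2)) * (∑ t : Fin L, ∑ i : Fin d, vResidMap d L A x t i ^ 2) +
        (∑ t ∈ Finset.univ.filter (fun t : Fin L => 1 ≤ (t : ℕ)),
          Real.log |((1 : Matrix (Fin d) (Fin d) ℝ) - vSigma d L A x t * A).det|) -
        (d * L : ℝ) * Real.log σ - ((d * L : ℝ) / 2) * Real.log (2 * Real.pi)) :=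
  stmt3_general d L A σ hσ S hS hinj hdet

end
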